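/- arXiv:1902.08372 — 2 statements merged into one kernel-verified Lean document; each statement's English description precedes it below -/
import Mathlib

section
/- Let μ be a deficient topological measure on a locally compact Hausdorff space X with μ(X) < ∞. Let (f_α) be a decreasing net in C₀⁺(X) converging uniformly to f ∈ C₀⁺(X). Then ∫_X f_α dμ → ∫_X f dμ; that is, the net ∫₀^∞ μ(f_α⁻¹([t,∞))) dt converges to ∫₀^∞ μ(f⁻¹([t,∞))) dt. -/
open MeasureTheory Set Filter Topology ENNReal

/-- A deficient topological measure on a topological space `X`: a set function with values in
`[0,∞]` (recorded on all sets, but constrained only on open and closed sets) that is finitely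
additive on disjoint compact sets, inner regular on open sets with respect to compact sets,
and outer regular on closed sets with respect to open sets. -/
structure DeficientTopologicalMeasure (X : Type*) [TopologicalSpace X] where
  m : Set X → ℝ≥0∞
  additive : ∀ ⦃C K : Set X⦄, IsCompact C → IsCompact K → Disjoint C K →
    m (C ∪ K) = m C + m K
  innerRegular : ∀ ⦃U : Set X⦄, IsOpen U →
    m U = ⨆ (K : Set X) (_ : IsCompact K) (_ : K ⊆ U), m K
  outerRegular : ∀ ⦃F : Set X⦄, IsClosed F →
    m F = ⨅ (U : Set X) (_ : IsOpen U) (_ : F ⊆ U), m U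

/-- A deficient topological measure is monotone: closed set inside an open set. -/
lemma dtm_mono_closed_open {X : Type*} [TopologicalSpace X]
    (μ : DeficientTopologicalMeasure X) {F U : Set X} (hF : IsClosed F) (hU : IsOpen U)
    (h : F ⊆ U) : μ.m F ≤ μ.m U := by
  rw [μ.outerRegular hF]
  exact iInf_le_of_le U (iInf_le_of_le hU (iInf_le _ h))

/-- A deficient topological measure is monotone on closed sets. -/
lemma dtm_mono_closed {X : Type*} [TopologicalSpace X]
    (μ : DeficientTopologicalMeasure X) {F G : Set X} (hF : IsClosed F) (hG : IsClosed G)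
    (h : F ⊆ G) : μ.m F ≤ μ.m G := by
  rw [μ.outerRegular hG]
  exact le_iInf fun U => le_iInf fun hU => le_iInf fun hGU =>
    dtm_mono_closed_open μ hF hU (h.trans hGU)

/-- Let `μ` be a finite deficient topological measure on a locally compact
Hausdorff space, and `(f_α)` a decreasing net in `C₀⁺(X)` converging uniformly to
`f ∈ C₀⁺(X)`. Then `∫₀^∞ μ(f_α⁻¹([t,∞))) dt → ∫₀^∞ μ(f⁻¹([t,∞))) dt`, i.e.
`∫_X f_α dμ → ∫_X f dμ`. -/
theorem stmt18 {X : Type*} [TopologicalSpace X] [LocallyCompactSpace X] [T2Space X]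
    {ι : Type*} [Preorder ι] [IsDirected ι (· ≤ ·)] [Nonempty ι]
    (μ : DeficientTopologicalMeasure X) (hμfin : μ.m univ < ∞)
    (f : ι → X → ℝ) (f₀ : X → ℝ)
    (hfc : ∀ α, Continuous (f α)) (hf₀c : Continuous f₀)
    (hf0 : ∀ α, ∀ x, 0 ≤ f α x) (hf₀0 : ∀ x, 0 ≤ f₀ x)
    (hfinf : ∀ α, Tendsto (f α) (cocompact X) (nhds 0))
    (hf₀inf : Tendsto f₀ (cocompact X) (nhds 0))
    (hdecr : ∀ ⦃α β : ι⦄, α ≤ β → ∀ x, f β x ≤ f α x)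
    (hunif : TendstoUniformly f f₀ atTop) :
    Tendsto (fun α => ∫⁻ t in Ioi (0 : ℝ), μ.m (f α ⁻¹' (Ici t))) atTop
      (nhds (∫⁻ t in Ioi (0 : ℝ), μ.m (f₀ ⁻¹' (Ici t)))) := by
  set I : ι → ℝ≥0∞ := fun α => ∫⁻ t in Ioi (0 : ℝ), μ.m (f α ⁻¹' (Ici t)) with hI
  set I₀ : ℝ≥0∞ := ∫⁻ t in Ioi (0 : ℝ), μ.m (f₀ ⁻¹' (Ici t)) with hI₀
  -- closedness of level sets
  have hclα : ∀ α (t : ℝ), IsClosed (f α ⁻¹' Ici t) := fun α t => isClosed_Ici.preimage (hfc α)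
  have hcl₀ : ∀ t : ℝ, IsClosed (f₀ ⁻¹' Ici t) := fun t => isClosed_Ici.preimage hf₀c
  -- f₀ ≤ f α pointwise
  have hle : ∀ α x, f₀ x ≤ f α x := by
    intro α x
    have hx : Tendsto (fun β => f β x) atTop (nhds (f₀ x)) :=
      (hunif.tendsto_at x)
    exact le_of_tendsto hx (eventually_atTop.2 ⟨α, fun β hβ => hdecr hβ x⟩)
  -- I is antitone
  have hanti : Antitone I := by
    intro α β h
    refine lintegral_mono fun t => dtm_mono_closed μ (hclα β t) (hclα α t) ?_
    intro x hx
    exact le_trans hx (hdecr h x)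
  -- I₀ ≤ I α for all α
  have hlow : ∀ α, I₀ ≤ I α := by
    intro α
    refine lintegral_mono fun t => dtm_mono_closed μ (hcl₀ t) (hclα α t) ?_
    intro x hx
    exact le_trans hx (hle α x)
  -- the net converges to its infimum
  have htend : Tendsto I atTop (nhds (⨅ α, I α)) := tendsto_atTop_iInf hanti
  -- so it suffices that the infimum equals I₀
  suffices h : (⨅ α, I α) = I₀ by rwa [h] at htend
  refine le_antisymm ?_ (le_iInf hlow)
  refine ENNReal.le_of_forall_pos_le_add fun ε hε hI₀fin => ?_
  set M : ℝ≥0∞ := μ.m univ with hM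
  set δ : ℝ := (ε : ℝ) / (M.toReal + 1) with hδ
  have hMtop : M ≠ ∞ := hμfin.ne
  have hM0 : 0 ≤ M.toReal := ENNReal.toReal_nonneg
  have hδpos : 0 < δ := div_pos (by exact_mod_cast hε) (by linarith)
  have hδM : ENNReal.ofReal δ * M ≤ (ε : ℝ≥0∞) := by
    calc ENNReal.ofReal δ * M = ENNReal.ofReal δ * ENNReal.ofReal M.toReal := by
          rw [ENNReal.ofReal_toReal hMtop]
      _ = ENNReal.ofReal (δ * M.toReal) := by
          rw [ENNReal.ofReal_mul hδpos.le]
      _ ≤ ENNReal.ofReal (ε : ℝ) := by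
          apply ENNReal.ofReal_le_ofReal
          rw [hδ, div_mul_eq_mul_div]
          rw [div_le_iff₀ (by linarith)]
          have : (0:ℝ) ≤ (ε:ℝ) := ε.coe_nonneg
          nlinarith
      _ = (ε : ℝ≥0∞) := ENNReal.ofReal_coe_nnreal
  -- choose α with sup-distance < δ
  obtain ⟨α, hα⟩ : ∃ α, ∀ x, dist (f₀ x) (f α x) < δ := by
    have := (Metric.tendstoUniformly_iff.1 hunif) δ hδpos
    exact this.exists
  have hαle : ∀ x, f α x < f₀ x + δ := by
    intro x
    have := hα x
    rw [Real.dist_eq] at this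
    have := abs_lt.1 this
    linarith [this.1]
  -- level sets of f α are inside shifted level sets of f₀
  have hsub : ∀ t : ℝ, f α ⁻¹' Ici t ⊆ f₀ ⁻¹' Ici (t - δ) := by
    intro t x hx
    simp only [mem_preimage, mem_Ici] at hx ⊢
    have := hαle x
    linarith
  set g₀ : ℝ → ℝ≥0∞ := fun s => μ.m (f₀ ⁻¹' Ici s) with hg₀
  have hg₀anti : Antitone g₀ := by
    intro s s' h
    exact dtm_mono_closed μ (hcl₀ s') (hcl₀ s) fun x hx => le_trans h hx
  have hg₀meas : Measurable g₀ := hg₀anti.measurable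
  have hg₀bd : ∀ s, g₀ s ≤ M := fun s =>
    dtm_mono_closed μ (hcl₀ s) isClosed_univ (subset_univ _)
  -- main estimate
  have key : I α ≤ M * ENNReal.ofReal δ + I₀ := by
    have step1 : I α ≤ ∫⁻ t in Ioi (0 : ℝ), g₀ (t - δ) :=
      lintegral_mono fun t => dtm_mono_closed μ (hclα α t) (hcl₀ (t - δ)) (hsub t)
    have step2 : ∫⁻ t in Ioi (0 : ℝ), g₀ (t - δ) = ∫⁻ s in Ioi (-δ), g₀ s := by
      have h1 : MeasurePreserving (fun t : ℝ => t + (-δ)) volume volume :=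
        measurePreserving_add_right volume (-δ)
      have h2 : MeasurableEmbedding (fun t : ℝ => t + (-δ)) := measurableEmbedding_addRight (-δ)
      have h3 : (fun t : ℝ => t + (-δ)) ⁻¹' Ioi (-δ) = Ioi (0 : ℝ) := by
        ext t
        simp [mem_preimage, mem_Ioi]
      calc ∫⁻ t in Ioi (0 : ℝ), g₀ (t - δ)
          = ∫⁻ t in (fun t : ℝ => t + (-δ)) ⁻¹' Ioi (-δ), g₀ (t + (-δ)) := by
            rw [h3]
            simp only [sub_eq_add_neg]
        _ = ∫⁻ s in Ioi (-δ), g₀ s := h1.setLIntegral_comp_preimage_emb h2 _ _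
    have step3 : ∫⁻ s in Ioi (-δ), g₀ s ≤ M * ENNReal.ofReal δ + I₀ := by
      have hsub2 : Ioi (-δ) ⊆ Ioc (-δ) 0 ∪ Ioi (0 : ℝ) := by
        intro t ht
        rcases le_or_gt t 0 with h | h
        · exact Or.inl ⟨ht, h⟩
        · exact Or.inr h
      calc ∫⁻ s in Ioi (-δ), g₀ s ≤ ∫⁻ s in Ioc (-δ) 0 ∪ Ioi (0 : ℝ), g₀ s :=
            lintegral_mono_set hsub2
        _ ≤ (∫⁻ s in Ioc (-δ) 0, g₀ s) + ∫⁻ s in Ioi (0 : ℝ), g₀ s :=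
            lintegral_union_le _ _ _
        _ ≤ M * ENNReal.ofReal δ + I₀ := by
            refine add_le_add ?_ le_rfl
            calc ∫⁻ s in Ioc (-δ) 0, g₀ s ≤ ∫⁻ _ in Ioc (-δ) 0, M :=
                  lintegral_mono fun s => hg₀bd s
              _ = M * volume (Ioc (-δ) (0 : ℝ)) := setLIntegral_const _ _
              _ = M * ENNReal.ofReal δ := by rw [Real.volume_Ioc]; norm_num
    exact step1.trans (step2 ▸ step3)
  calc (⨅ β, I β) ≤ I α := iInf_le _ α
    _ ≤ M * ENNReal.ofReal δ + I₀ := key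
    _ ≤ (ε : ℝ≥0∞) + I₀ := add_le_add (by rw [mul_comm]; exact hδM) le_rfl
    _ = I₀ + ε := add_comm _ _
end

section
/- Let μ be a compact-finite deficient topological measure on a locally compact Hausdorff space X, K a compact set, and (f_α) a net of continuous nonnegative compactly supported functions on X with supp f_α ⊆ K for all α, converging uniformly to a continuous nonnegative function f with supp f ⊆ K. Then ∫_X f_α dμ → ∫_X f dμ, where for a continuous nonnegative compactly supported h, ∫_X h dμ := ∫₀^∞ μ(h⁻¹((t,∞))) dt. -/
open MeasureTheory Set Filter Topology ENNReal

/-!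
If `‖g - h‖∞ ≤ δ`, then `{g > t + δ} ⊆ {h > t}`, so shifting the variable of the layer-cake
integral by `δ` compares `∫ g dμ` with `∫ h dμ`; the only loss is the layer `0 < t ≤ δ`, on
which every superlevel set `{g > t}` is an open subset of the closed set `K`, hence of measure
at most `μ K < ∞`.
Hence `∫ g dμ ≤ ∫ h dμ + δ μ(K)` and symmetrically, which gives continuity under uniform
convergence.
-/

open Function

lemma ENNReal.exists_pos_mul_ofReal_lt {M ε : ℝ≥0∞} (hM : M ≠ ∞) (hε : 0 < ε) :
    ∃ δ : ℝ, 0 < δ ∧ M * ENNReal.ofReal δ < ε := by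
  have hlim : Tendsto (fun δ : ℝ => M * ENNReal.ofReal δ) (𝓝[>] 0) (𝓝 0) := by
    simpa using ENNReal.Tendsto.const_mul
      (ENNReal.tendsto_ofReal (tendsto_nhdsWithin_of_tendsto_nhds (tendsto_id (x := 𝓝 0))))
      (Or.inr hM)
  exact ((eventually_mem_nhdsWithin (a := (0 : ℝ)) (s := Ioi 0)).and
    (hlim.eventually (gt_mem_nhds hε))).exists

lemma setLIntegral_Ioi_comp_add_right (φ : ℝ → ℝ≥0∞) (a b : ℝ) :
    ∫⁻ t in Ioi a, φ (t + b) = ∫⁻ t in Ioi (a + b), φ t := by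
  rw [(measurePreserving_add_right volume b).setLIntegral_comp_emb
    (measurableEmbedding_addRight b), image_add_const_Ioi]

namespace DeficientTopologicalMeasure

variable {X : Type*} [TopologicalSpace X] (μ : DeficientTopologicalMeasure X)

noncomputable def layerIntegral (g : X → ℝ) : ℝ≥0∞ :=
  ∫⁻ t in Ioi (0 : ℝ), μ.m (g ⁻¹' Ioi t)

variable {μ}

lemma mono_compact_open {C U : Set X} (hC : IsCompact C) (hU : IsOpen U) (h : C ⊆ U) :
    μ.m C ≤ μ.m U := by
  rw [μ.innerRegular hU]
  exact le_iSup₂_of_le C hC (le_iSup_of_le h le_rfl)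

lemma mono_open_open {U V : Set X} (hU : IsOpen U) (hV : IsOpen V) (h : U ⊆ V) :
    μ.m U ≤ μ.m V := by
  rw [μ.innerRegular hU]
  exact iSup₂_le fun C hC => iSup_le fun hCU => mono_compact_open hC hV (hCU.trans h)

lemma mono_compact_closed {C F : Set X} (hC : IsCompact C) (hF : IsClosed F) (h : C ⊆ F) :
    μ.m C ≤ μ.m F := by
  rw [μ.outerRegular hF]
  exact le_iInf₂ fun U hU => le_iInf fun hFU => mono_compact_open hC hU (h.trans hFU)

lemma mono_open_closed {U F : Set X} (hU : IsOpen U) (hF : IsClosed F) (h : U ⊆ F) :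
    μ.m U ≤ μ.m F := by
  rw [μ.innerRegular hU]
  exact iSup₂_le fun C hC => iSup_le fun hCU => mono_compact_closed hC hF (hCU.trans h)

lemma m_preimage_Ioi_le {g : X → ℝ} (hg : Continuous g) {F : Set X} (hF : IsClosed F)
    (hgF : support g ⊆ F) {t : ℝ} (ht : 0 ≤ t) : μ.m (g ⁻¹' Ioi t) ≤ μ.m F :=
  mono_open_closed (isOpen_Ioi.preimage hg) hF fun _ hx => hgF (ht.trans_lt hx).ne'

lemma layerIntegral_le_add_of_le_add {g h : X → ℝ} (hg : Continuous g) (hh : Continuous h)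
    {F : Set X} (hF : IsClosed F) (hgF : support g ⊆ F) {δ : ℝ} (hδ : 0 ≤ δ)
    (hgh : ∀ x, g x ≤ h x + δ) :
    μ.layerIntegral g ≤ μ.layerIntegral h + μ.m F * ENNReal.ofReal δ := by
  have hsmall : ∫⁻ t in Ioc 0 δ, μ.m (g ⁻¹' Ioi t) ≤ μ.m F * ENNReal.ofReal δ :=
    calc ∫⁻ t in Ioc 0 δ, μ.m (g ⁻¹' Ioi t) ≤ ∫⁻ _ in Ioc 0 δ, μ.m F :=
          setLIntegral_mono' measurableSet_Ioc fun t ht => m_preimage_Ioi_le hg hF hgF ht.1.le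
      _ = μ.m F * ENNReal.ofReal δ := by rw [setLIntegral_const, Real.volume_Ioc, sub_zero]
  have hlarge : ∫⁻ t in Ioi δ, μ.m (g ⁻¹' Ioi t) ≤ μ.layerIntegral h :=
    calc ∫⁻ t in Ioi δ, μ.m (g ⁻¹' Ioi t) = ∫⁻ t in Ioi 0, μ.m (g ⁻¹' Ioi (t + δ)) := by
          rw [setLIntegral_Ioi_comp_add_right (fun t => μ.m (g ⁻¹' Ioi t)), zero_add]
      _ ≤ μ.layerIntegral h := setLIntegral_mono' measurableSet_Ioi fun t _ =>
          mono_open_open (isOpen_Ioi.preimage hg) (isOpen_Ioi.preimage hh) fun x hx => by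
            simp only [mem_preimage, mem_Ioi] at hx ⊢
            linarith [hgh x]
  calc μ.layerIntegral g
      ≤ (∫⁻ t in Ioc 0 δ, μ.m (g ⁻¹' Ioi t)) + ∫⁻ t in Ioi δ, μ.m (g ⁻¹' Ioi t) := by
        rw [DeficientTopologicalMeasure.layerIntegral, ← Ioc_union_Ioi_eq_Ioi hδ]
        exact lintegral_union_le _ _ _
    _ ≤ μ.layerIntegral h + μ.m F * ENNReal.ofReal δ := by
        rw [add_comm (μ.layerIntegral h)]
        exact add_le_add hsmall hlarge

end DeficientTopologicalMeasure

open DeficientTopologicalMeasure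

theorem stmt19_general {X : Type*} [TopologicalSpace X] [T2Space X]
    {ι : Type*} [Preorder ι]
    (μ : DeficientTopologicalMeasure X)
    (hcf : ∀ K : Set X, IsCompact K → μ.m K < ∞)
    (K : Set X) (hK : IsCompact K)
    (f : ι → X → ℝ) (f₀ : X → ℝ)
    (hfc : ∀ α, Continuous (f α)) (hf₀c : Continuous f₀)
    (hfK : ∀ α, tsupport (f α) ⊆ K) (hf₀K : tsupport f₀ ⊆ K)
    (hunif : TendstoUniformly f f₀ atTop) :
    Tendsto (fun α => ∫⁻ t in Ioi (0 : ℝ), μ.m (f α ⁻¹' (Ioi t))) atTop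
      (nhds (∫⁻ t in Ioi (0 : ℝ), μ.m (f₀ ⁻¹' (Ioi t)))) := by
  refine ENNReal.tendsto_nhds_of_Icc fun ε hε => ?_
  obtain ⟨δ, hδ, hδε⟩ := ENNReal.exists_pos_mul_ofReal_lt (hcf K hK).ne hε
  filter_upwards [Metric.tendstoUniformly_iff.mp hunif δ hδ] with α hα
  have hclose x : f₀ x ≤ f α x + δ ∧ f α x ≤ f₀ x + δ := by
    have := hα x
    rw [Real.dist_eq, abs_sub_lt_iff] at this
    constructor <;> linarith
  have hsupp {g : X → ℝ} (hg : tsupport g ⊆ K) : support g ⊆ K := (subset_tsupport g).trans hg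
  constructor
  · rw [tsub_le_iff_right]
    exact (layerIntegral_le_add_of_le_add hf₀c (hfc α) hK.isClosed (hsupp hf₀K) hδ.le
      fun x => (hclose x).1).trans (add_le_add le_rfl hδε.le)
  · exact (layerIntegral_le_add_of_le_add (hfc α) hf₀c hK.isClosed (hsupp (hfK α)) hδ.le
      fun x => (hclose x).2).trans (add_le_add le_rfl hδε.le)

/-- Let `μ` be a compact-finite deficient topological measure on a locally
compact Hausdorff space, `K` compact, and `(f_α)` a net of continuous nonnegative functions
with supports in `K` converging uniformly to a continuous nonnegative `f` with support in
`K`. Then `∫_X f_α dμ → ∫_X f dμ`, where `∫_X h dμ = ∫₀^∞ μ(h⁻¹((t,∞))) dt`. -/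
theorem stmt19 {X : Type*} [TopologicalSpace X] [LocallyCompactSpace X] [T2Space X]
    {ι : Type*} [Preorder ι] [IsDirected ι (· ≤ ·)] [Nonempty ι]
    (μ : DeficientTopologicalMeasure X)
    (hcf : ∀ K : Set X, IsCompact K → μ.m K < ∞)
    (K : Set X) (hK : IsCompact K)
    (f : ι → X → ℝ) (f₀ : X → ℝ)
    (hfc : ∀ α, Continuous (f α)) (hf₀c : Continuous f₀)
    (hf0 : ∀ α, ∀ x, 0 ≤ f α x) (hf₀0 : ∀ x, 0 ≤ f₀ x)
    (hfK : ∀ α, tsupport (f α) ⊆ K) (hf₀K : tsupport f₀ ⊆ K)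
    (hunif : TendstoUniformly f f₀ atTop) :
    Tendsto (fun α => ∫⁻ t in Ioi (0 : ℝ), μ.m (f α ⁻¹' (Ioi t))) atTop
      (nhds (∫⁻ t in Ioi (0 : ℝ), μ.m (f₀ ⁻¹' (Ioi t)))) :=
  stmt19_general μ hcf K hK f f₀ hfc hf₀c hfK hf₀K hunif
end
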